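/- The uniform distribution on the sphere is Φ_p-optimal for estimating K^T c for every p ∈ [−∞, 1): for any design ξ on [0,π]×(−π,π] with range(K) ⊆ range(M(ξ)), Φ_p(ξ) ≤ Φ_p(ξ*), where Φ_p(ξ) = (tr((K^T M^−(ξ) K)^{−p}))^{1/p} and K is any block selection matrix of the form K_{k_0,...,k_q}. -/

import Mathlib

/-!
Unsöld's addition theorem `∑_{m=-l}^{l} Y_{lm}² = 2l + 1` makes the selected regressors satisfy
`∑_c f_{σ c}² = s` pointwise, so `tr (Kᵀ M(ξ) K) = s` for every design `ξ`. If `M u = K w`, then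
`wᵀ C w = uᵀ M u` and `wᵀ w = uᵀ M K w`, and Cauchy–Schwarz for the semi-inner product `M` gives
`(wᵀ w)² ≤ (wᵀ C w) (wᵀ Kᵀ M K w)`. On the unit eigenvectors `vᵢ` of `C` this reads
`λᵢ⁻¹ ≤ vᵢᵀ Kᵀ M K vᵢ`, hence `∑ λᵢ⁻¹ ≤ s`. That is all the criteria need: the tangent-line
bounds `λ^{-p} ≥ 1 + p (λ⁻¹ - 1)` (`p < 0`) and `≤` (`0 < p < 1`) handle `Φ_p`,
`log λ ≥ 1 - λ⁻¹` the determinant, and pigeonhole the largest eigenvalue.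

The addition theorem is the polynomial identity
`P_l² + 2 ∑_{m=1}^{l} (l-m)!/(l+m)! (1 - x²)^m (P_l^{(m)})² = 1`: its derivative telescopes by the
differentiated Legendre equation, and its value at `x = 1` is `P_l(1)² = 1`.
-/

open MeasureTheory Real Matrix

noncomputable def legendreP (n : ℕ) : Polynomial ℝ :=
  Polynomial.C ((2 ^ n * n.factorial : ℝ))⁻¹ *
    (Polynomial.derivative^[n] ((Polynomial.X ^ 2 - 1) ^ n))

noncomputable def assocP (n m : ℕ) (x : ℝ) : ℝ :=
  (-1 : ℝ) ^ m * (1 - x ^ 2) ^ ((m : ℝ) / 2) *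
    (Polynomial.derivative^[m] (legendreP n)).eval x

noncomputable def sphY (ℓ : ℕ) (m : ℤ) (θ φ : ℝ) : ℝ :=
  if m = 0 then Real.sqrt (2 * ℓ + 1) * assocP ℓ 0 (Real.cos θ)
  else if 0 < m then
    Real.sqrt (2 * (2 * ℓ + 1) * ((ℓ - m.toNat).factorial : ℝ) / ((ℓ + m.toNat).factorial : ℝ)) *
      assocP ℓ m.toNat (Real.cos θ) * Real.cos ((m : ℝ) * φ)
  else
    Real.sqrt (2 * (2 * ℓ + 1) * ((ℓ - (-m).toNat).factorial : ℝ) / ((ℓ + (-m).toNat).factorial : ℝ)) *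
      assocP ℓ (-m).toNat (Real.cos θ) * Real.sin (((-m : ℤ) : ℝ) * φ)

noncomputable def fvec (d : ℕ) (j : Fin ((d + 1) ^ 2)) (θ φ : ℝ) : ℝ :=
  sphY (Nat.sqrt j) ((j : ℤ) - (Nat.sqrt j : ℤ) ^ 2 - (Nat.sqrt j : ℤ)) θ φ

noncomputable def infoMat (d : ℕ) (ξ : Measure (ℝ × ℝ)) :
    Matrix (Fin ((d + 1) ^ 2)) (Fin ((d + 1) ^ 2)) ℝ :=
  fun i j => ∫ z, fvec d i z.1 z.2 * fvec d j z.1 z.2 ∂ξ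

noncomputable def unifSphere : Measure (ℝ × ℝ) :=
  ((volume.restrict (Set.Icc 0 π)).withDensity
      (fun θ => ENNReal.ofReal (Real.sin θ / (4 * π)))).prod
    (volume.restrict (Set.Ioc (-π) π))

namespace Matrix

theorem transpose_mul_mul_submatrix_one {m n R : Type*} [Fintype m] [DecidableEq m]
    [NonAssocSemiring R] (σ : n → m) (A : Matrix m m R) :
    ((1 : Matrix m m R).submatrix id σ)ᵀ * A * (1 : Matrix m m R).submatrix id σ
      = A.submatrix σ σ := by
  ext; simp [mul_apply, one_apply]

section GeneralizedInverse

variable {m n : Type*} [Fintype m] [Fintype n]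

theorem PosSemidef.sq_dotProduct_mulVec_le [DecidableEq m] {M : Matrix m m ℝ} (hM : M.PosSemidef)
    (x y : m → ℝ) : (x ⬝ᵥ M *ᵥ y) ^ 2 ≤ (x ⬝ᵥ M *ᵥ x) * (y ⬝ᵥ M *ᵥ y) := by
  have hB := LinearMap.BilinForm.apply_mul_apply_le_of_forall_zero_le (toLinearMap₂' ℝ M)
    (fun x ↦ by simpa [toLinearMap₂'_apply'] using hM.dotProduct_mulVec_nonneg x) x y
  have hsymm : y ⬝ᵥ M *ᵥ x = x ⬝ᵥ M *ᵥ y := by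
    rw [dotProduct_mulVec, ← mulVec_transpose, ← conjTranspose_eq_transpose_of_trivial, hM.1,
      dotProduct_comm]
  simpa only [toLinearMap₂'_apply', hsymm, ← sq] using hB

theorem dotProduct_transpose_mul_mul_mulVec (A : Matrix m m ℝ) (K : Matrix m n ℝ)
    (w : n → ℝ) : w ⬝ᵥ (Kᵀ * A * K) *ᵥ w = (K *ᵥ w) ⬝ᵥ A *ᵥ (K *ᵥ w) := by
  rw [← mulVec_mulVec, ← mulVec_mulVec, dotProduct_mulVec, vecMul_transpose]

theorem sq_dotProduct_self_le_of_mul_mul_eq_self [DecidableEq m] [DecidableEq n]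
    {M G : Matrix m m ℝ} {K : Matrix m n ℝ} (hM : M.PosSemidef) (hG : M * G * M = M)
    (hK : Kᵀ * K = 1) (hrange : ∀ w, ∃ u, M *ᵥ u = K *ᵥ w) (w : n → ℝ) :
    (w ⬝ᵥ w) ^ 2 ≤ (w ⬝ᵥ (Kᵀ * G * K) *ᵥ w) * (w ⬝ᵥ (Kᵀ * M * K) *ᵥ w) := by
  obtain ⟨u, hu⟩ := hrange w
  have hMt : u ᵥ* M = M *ᵥ u := by
    rw [← mulVec_transpose, ← conjTranspose_eq_transpose_of_trivial, hM.1]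
  have hw : w ⬝ᵥ w = u ⬝ᵥ M *ᵥ (K *ᵥ w) := calc
    w ⬝ᵥ w = (K *ᵥ w) ⬝ᵥ (K *ᵥ w) := by
      simpa only [Matrix.mul_one, hK, one_mulVec] using
        dotProduct_transpose_mul_mul_mulVec 1 K w
    _ = u ⬝ᵥ M *ᵥ (K *ᵥ w) := by rw [← hu, ← hMt, dotProduct_mulVec]
  have hC : w ⬝ᵥ (Kᵀ * G * K) *ᵥ w = u ⬝ᵥ M *ᵥ u := by
    rw [dotProduct_transpose_mul_mul_mulVec, ← hu, mulVec_mulVec, ← hMt, ← dotProduct_mulVec,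
      mulVec_mulVec, ← mul_assoc, hG, hMt]
  rw [hw, hC, dotProduct_transpose_mul_mul_mulVec]
  exact hM.sq_dotProduct_mulVec_le u (K *ᵥ w)

end GeneralizedInverse

section Eigenvalues

variable {n : Type*} [Fintype n] [DecidableEq n] {C D : Matrix n n ℝ}

theorem IsHermitian.sum_dotProduct_mulVec_eigenvectorBasis (hC : C.IsHermitian) :
    ∑ i, ⇑(hC.eigenvectorBasis i) ⬝ᵥ D *ᵥ ⇑(hC.eigenvectorBasis i) = D.trace := by
  have htrace : (toEuclideanLin D).trace ℝ _ = D.trace := by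
    rw [toEuclideanLin_eq_toLin_orthonormal, LinearMap.trace_eq_matrix_trace ℝ
      (EuclideanSpace.basisFun n ℝ).toBasis, LinearMap.toMatrix_toLin]
  rw [← htrace, LinearMap.trace_eq_sum_inner _ hC.eigenvectorBasis]
  simp [EuclideanSpace.inner_eq_star_dotProduct, dotProduct_comm]

theorem IsHermitian.dotProduct_mulVec_eigenvectorBasis (hC : C.IsHermitian) (i : n) :
    ⇑(hC.eigenvectorBasis i) ⬝ᵥ C *ᵥ ⇑(hC.eigenvectorBasis i) = hC.eigenvalues i := by
  simpa [dotProduct_comm] using (hC.eigenvalues_eq i).symm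

theorem IsHermitian.dotProduct_self_eigenvectorBasis (hC : C.IsHermitian) (i : n) :
    ⇑(hC.eigenvectorBasis i) ⬝ᵥ ⇑(hC.eigenvectorBasis i) = 1 := by
  have := real_inner_self_eq_norm_sq (hC.eigenvectorBasis i)
  rw [hC.eigenvectorBasis.orthonormal.1 i, EuclideanSpace.inner_eq_star_dotProduct] at this
  simpa using this

theorem IsHermitian.one_le_eigenvalues_mul (hC : C.IsHermitian)
    (h : ∀ w, (w ⬝ᵥ w) ^ 2 ≤ (w ⬝ᵥ C *ᵥ w) * (w ⬝ᵥ D *ᵥ w)) (i : n) :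
    1 ≤ hC.eigenvalues i *
      (⇑(hC.eigenvectorBasis i) ⬝ᵥ D *ᵥ ⇑(hC.eigenvectorBasis i)) := by
  simpa [hC.dotProduct_self_eigenvectorBasis, hC.dotProduct_mulVec_eigenvectorBasis] using
    h (hC.eigenvectorBasis i)

theorem IsHermitian.eigenvalues_pos_of_sq_dotProduct_le (hC : C.IsHermitian)
    (hD : D.PosSemidef) (h : ∀ w, (w ⬝ᵥ w) ^ 2 ≤ (w ⬝ᵥ C *ᵥ w) * (w ⬝ᵥ D *ᵥ w))
    (i : n) : 0 < hC.eigenvalues i := by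
  have h1 := hC.one_le_eigenvalues_mul h i
  have h2 := hD.dotProduct_mulVec_nonneg (hC.eigenvectorBasis i)
  rw [star_trivial] at h2
  by_contra! hle
  nlinarith

theorem IsHermitian.sum_inv_eigenvalues_le_trace (hC : C.IsHermitian) (hD : D.PosSemidef)
    (h : ∀ w, (w ⬝ᵥ w) ^ 2 ≤ (w ⬝ᵥ C *ᵥ w) * (w ⬝ᵥ D *ᵥ w)) :
    ∑ i, (hC.eigenvalues i)⁻¹ ≤ D.trace := by
  rw [← hC.sum_dotProduct_mulVec_eigenvectorBasis]
  gcongr with i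
  rw [inv_le_iff_one_le_mul₀' (hC.eigenvalues_pos_of_sq_dotProduct_le hD h i)]
  exact hC.one_le_eigenvalues_mul h i

end Eigenvalues

end Matrix

section Means
variable {ι : Type*} [Fintype ι] {μ : ι → ℝ}

theorem one_le_prod_of_sum_inv_le_card (hμ : ∀ i, 0 < μ i)
    (h : ∑ i, (μ i)⁻¹ ≤ Fintype.card ι) : 1 ≤ ∏ i, μ i := by
  have hlog : 0 ≤ ∑ i, Real.log (μ i) := calc
    0 ≤ ∑ i, (1 - (μ i)⁻¹) := by
      rw [Finset.sum_sub_distrib, Finset.sum_const, Finset.card_univ, nsmul_one]; linarith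
    _ ≤ ∑ i, Real.log (μ i) :=
      Finset.sum_le_sum fun i _ ↦ Real.one_sub_inv_le_log_of_pos (hμ i)
  rwa [← Real.log_prod fun i _ ↦ (hμ i).ne',
    Real.log_nonneg_iff (Finset.prod_pos fun i _ ↦ hμ i)] at hlog

theorem exists_one_le_of_sum_inv_le_card [Nonempty ι] (hμ : ∀ i, 0 < μ i)
    (h : ∑ i, (μ i)⁻¹ ≤ Fintype.card ι) : ∃ i, 1 ≤ μ i := by
  obtain ⟨i, -, hi⟩ :=
    Finset.exists_le_of_sum_le (f := fun i ↦ (μ i)⁻¹) (g := fun _ ↦ 1)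
    Finset.univ_nonempty (by simpa using h)
  exact ⟨i, (inv_le_one₀ (hμ i)).mp hi⟩

theorem card_le_sum_rpow_neg_of_sum_inv_le_card {p : ℝ} (hp : p < 0) (hμ : ∀ i, 0 < μ i)
    (h : ∑ i, (μ i)⁻¹ ≤ Fintype.card ι) :
    (Fintype.card ι : ℝ) ≤ ∑ i, μ i ^ (-p) := calc
  (Fintype.card ι : ℝ) ≤ ∑ i, (1 + (-p) * (1 - (μ i)⁻¹)) := by
    rw [Finset.sum_add_distrib, ← Finset.mul_sum, Finset.sum_sub_distrib]
    simp only [Finset.sum_const, Finset.card_univ, nsmul_one]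
    nlinarith
  _ ≤ ∑ i, μ i ^ (-p) := Finset.sum_le_sum fun i _ ↦ calc
    1 + (-p) * (1 - (μ i)⁻¹) ≤ 1 + (-p) * Real.log (μ i) := by
      gcongr
      · linarith
      · exact Real.one_sub_inv_le_log_of_pos (hμ i)
    _ ≤ Real.exp (Real.log (μ i) * -p) := by
      linarith [Real.add_one_le_exp (Real.log (μ i) * -p)]
    _ = μ i ^ (-p) := (Real.rpow_def_of_pos (hμ i) _).symm

theorem sum_rpow_neg_le_card_of_sum_inv_le_card {p : ℝ} (hp0 : 0 < p) (hp1 : p ≤ 1)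
    (hμ : ∀ i, 0 < μ i) (h : ∑ i, (μ i)⁻¹ ≤ Fintype.card ι) :
    ∑ i, μ i ^ (-p) ≤ Fintype.card ι := calc
  ∑ i, μ i ^ (-p) ≤ ∑ i, (1 + p * ((μ i)⁻¹ - 1)) := Finset.sum_le_sum fun i _ ↦ by
    have := rpow_one_add_le_one_add_mul_self (s := (μ i)⁻¹ - 1)
      (by linarith [inv_pos.mpr (hμ i)]) hp0.le hp1
    rwa [add_sub_cancel, Real.inv_rpow (hμ i).le, ← Real.rpow_neg (hμ i).le] at this
  _ ≤ Fintype.card ι := by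
    rw [Finset.sum_add_distrib, ← Finset.mul_sum, Finset.sum_sub_distrib]
    simp only [Finset.sum_const, Finset.card_univ, nsmul_one]
    nlinarith

theorem rpow_sum_rpow_neg_le_of_sum_inv_le_card [Nonempty ι] {p : ℝ} (hp : p < 1) (hp0 : p ≠ 0)
    (hμ : ∀ i, 0 < μ i) (h : ∑ i, (μ i)⁻¹ ≤ Fintype.card ι) :
    (∑ i, μ i ^ (-p)) ^ (1 / p) ≤ (Fintype.card ι : ℝ) ^ (1 / p) := by
  rcases hp0.lt_or_gt with hneg | hpos
  · exact Real.rpow_le_rpow_of_nonpos (by exact_mod_cast Fintype.card_pos)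
      (card_le_sum_rpow_neg_of_sum_inv_le_card hneg hμ h)
      (by rw [one_div]; exact inv_nonpos.mpr hneg.le)
  · exact Real.rpow_le_rpow (Finset.sum_nonneg fun i _ ↦ (Real.rpow_pos_of_pos (hμ i) _).le)
      (sum_rpow_neg_le_card_of_sum_inv_le_card hpos hp.le hμ h) (by positivity)

end Means

theorem posSemidef_of_integral_mul {ι α : Type*} [Fintype ι] [MeasurableSpace α]
    {μ : Measure α} {f : ι → α → ℝ}
    (hf : ∀ i j, Integrable (fun a ↦ f i a * f j a) μ) :
    (Matrix.of fun i j ↦ ∫ a, f i a * f j a ∂μ).PosSemidef := by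
  refine .of_dotProduct_mulVec_nonneg (by ext i j; simp [mul_comm]) fun x ↦ ?_
  have hquad : star x ⬝ᵥ (Matrix.of fun i j ↦ ∫ a, f i a * f j a ∂μ) *ᵥ x
      = ∫ a, (∑ i, x i * f i a) ^ 2 ∂μ := calc
    _ = ∑ i, ∑ j, ∫ a, x i * x j * (f i a * f j a) ∂μ := by
      simp only [star_trivial, dotProduct, mulVec, of_apply, Finset.mul_sum, integral_const_mul]
      exact Finset.sum_congr rfl fun i _ ↦ Finset.sum_congr rfl fun j _ ↦ by ring
    _ = ∫ a, ∑ i, ∑ j, x i * x j * (f i a * f j a) ∂μ := by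
      rw [integral_finsetSum _ fun i _ ↦ integrable_finsetSum _ fun j _ ↦ (hf i j).const_mul _]
      exact Finset.sum_congr rfl fun i _ ↦
        (integral_finsetSum _ fun j _ ↦ (hf i j).const_mul _).symm
    _ = ∫ a, (∑ i, x i * f i a) ^ 2 ∂μ := by
      congr 1 with a
      rw [sq, Finset.sum_mul_sum]
      exact Finset.sum_congr rfl fun i _ ↦ Finset.sum_congr rfl fun j _ ↦ by ring
  rw [hquad]
  exact integral_nonneg fun a ↦ sq_nonneg _

section AdditionTheorem

open Polynomial

noncomputable def rodriguesDeriv (l k : ℕ) : ℝ[X] := derivative^[k] ((X ^ 2 - 1) ^ l)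

@[simp] theorem derivative_rodriguesDeriv (l k : ℕ) :
    derivative (rodriguesDeriv l k) = rodriguesDeriv l (k + 1) := by
  simp [rodriguesDeriv, Function.iterate_succ_apply']

theorem sq_sub_one_mul_rodriguesDeriv_one (l : ℕ) :
    (X ^ 2 - 1) * rodriguesDeriv l 1 = 2 * (l : ℝ[X]) * X * rodriguesDeriv l 0 := by
  cases l with
  | zero => simp [rodriguesDeriv]
  | succ n =>
    simp only [rodriguesDeriv, Function.iterate_one, Function.iterate_zero, id_eq, derivative_pow,
      derivative_sub, derivative_X, derivative_one, Nat.cast_add, Nat.cast_one, Nat.cast_ofNat,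
      map_add, map_natCast, map_one, map_ofNat, add_tsub_cancel_right, Nat.add_one_sub_one,
      pow_one, mul_one, sub_zero]
    ring

-- The `(j + 1)`-st derivative of `(X² - 1) R' = 2 l X R`, where `R = (X² - 1) ^ l`.
theorem rodriguesDeriv_recurrence (l j : ℕ) :
    (X ^ 2 - 1) * rodriguesDeriv l (j + 2) + 2 * ((j : ℝ[X]) + 1) * X * rodriguesDeriv l (j + 1)
      + ((j : ℝ[X]) + 1) * (j : ℝ[X]) * rodriguesDeriv l j
    = 2 * (l : ℝ[X]) * X * rodriguesDeriv l (j + 1)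
      + 2 * (l : ℝ[X]) * ((j : ℝ[X]) + 1) * rodriguesDeriv l j := by
  induction j with
  | zero =>
    have h := congrArg derivative (sq_sub_one_mul_rodriguesDeriv_one l)
    simp only [derivative_mul, derivative_sub, derivative_one, derivative_X,
      derivative_X_pow, map_ofNat, Nat.cast_ofNat, derivative_rodriguesDeriv,
      derivative_ofNat, derivative_natCast] at h
    push_cast at h ⊢
    linear_combination h
  | succ n ih =>
    have h := congrArg derivative ih
    simp only [derivative_mul, derivative_sub, derivative_add, derivative_one, derivative_X,
      derivative_X_pow, map_ofNat, Nat.cast_ofNat, derivative_rodriguesDeriv,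
      derivative_ofNat, derivative_natCast] at h
    push_cast at h ⊢
    linear_combination h

noncomputable def legendreDeriv (l m : ℕ) : ℝ[X] := derivative^[m] (legendreP l)

@[simp] theorem derivative_legendreDeriv (l m : ℕ) :
    derivative (legendreDeriv l m) = legendreDeriv l (m + 1) := by
  simp [legendreDeriv, Function.iterate_succ_apply']

theorem legendreDeriv_eq (l m : ℕ) :
    legendreDeriv l m = C ((2 ^ l * l.factorial : ℝ))⁻¹ * rodriguesDeriv l (l + m) := by
  rw [legendreDeriv, legendreP, iterate_derivative_C_mul, rodriguesDeriv, Nat.add_comm,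
    Function.iterate_add_apply]

theorem legendreDeriv_succ_self (l : ℕ) : legendreDeriv l (l + 1) = 0 := by
  rw [legendreDeriv_eq, rodriguesDeriv, iterate_derivative_eq_zero, mul_zero]
  have h1 : ((X : ℝ[X]) ^ 2 - 1).natDegree ≤ 2 := (natDegree_sub_le _ _).trans (by simp)
  have := (natDegree_pow_le (p := (X : ℝ[X]) ^ 2 - 1) (n := l)).trans
    (Nat.mul_le_mul_left l h1)
  omega

theorem legendreDeriv_ode (l m : ℕ) :
    (1 - X ^ 2) * legendreDeriv l (m + 2) + ((l : ℝ[X]) * ((l : ℝ[X]) + 1)) * legendreDeriv l m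
    = 2 * ((m : ℝ[X]) + 1) * X * legendreDeriv l (m + 1)
      + ((m : ℝ[X]) * ((m : ℝ[X]) + 1)) * legendreDeriv l m := by
  have h := rodriguesDeriv_recurrence l (l + m)
  rw [show l + m + 2 = l + (m + 2) by omega, show l + m + 1 = l + (m + 1) by omega] at h
  simp only [legendreDeriv_eq]
  push_cast at h ⊢
  linear_combination (-C ((2 ^ l * l.factorial : ℝ))⁻¹) * h

theorem eval_one_iterate_derivative_X_sub_one_pow_mul (l : ℕ) (h : ℝ[X]) :
    (derivative^[l] ((X - 1) ^ l * h)).eval 1 = l.factorial * h.eval 1 := by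
  induction l generalizing h with
  | zero => simp
  | succ n ih =>
    have e : derivative ((X - 1) ^ (n + 1) * h)
        = (X - 1) ^ n * (((n : ℝ[X]) + 1) * h + (X - 1) * derivative h) := by
      simp only [derivative_mul, derivative_pow, derivative_sub, derivative_X, derivative_one,
        map_natCast, add_tsub_cancel_right]
      push_cast
      ring
    rw [Function.iterate_succ_apply, e, ih]
    simp only [eval_add, eval_mul, eval_natCast, eval_one, eval_sub, eval_X, sub_self, zero_mul,
      add_zero, Nat.factorial_succ, Nat.cast_mul, Nat.cast_add, Nat.cast_one]
    ring

theorem legendreP_eval_one (l : ℕ) : (legendreP l).eval 1 = 1 := by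
  have e : (X ^ 2 - 1 : ℝ[X]) ^ l = (X - 1) ^ l * (X + 1) ^ l := by rw [← mul_pow]; ring
  rw [legendreP, e, eval_mul, eval_C, eval_one_iterate_derivative_X_sub_one_pow_mul]
  simp only [eval_pow, eval_add, eval_X, eval_one]
  rw [one_add_one_eq_two]
  field_simp

noncomputable def assocNormConst (l m : ℕ) : ℝ :=
  ((l - m).factorial : ℝ) / ((l + m).factorial : ℝ)

theorem assocNormConst_zero (l : ℕ) : assocNormConst l 0 = 1 := by
  simp [assocNormConst, Nat.factorial_ne_zero]

theorem assocNormConst_succ_mul {l m : ℕ} (hm : m < l) :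
    assocNormConst l (m + 1) * (((l : ℝ) + m + 1) * ((l : ℝ) - m)) = assocNormConst l m := by
  unfold assocNormConst
  rw [show l + (m + 1) = l + m + 1 by omega, show l - m = l - (m + 1) + 1 by omega,
    Nat.factorial_succ, Nat.factorial_succ]
  have hsub : ((l - (m + 1) : ℕ) : ℝ) = (l : ℝ) - m - 1 := by
    rw [Nat.cast_sub (by omega)]; push_cast; ring
  push_cast [hsub]
  field_simp
  ring

noncomputable def assocSqPoly (l m : ℕ) : ℝ[X] :=
  C (assocNormConst l m) * (1 - X ^ 2) ^ m * legendreDeriv l m ^ 2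

noncomputable def assocCrossPoly (l m : ℕ) : ℝ[X] :=
  C (assocNormConst l m) * (1 - X ^ 2) ^ m * legendreDeriv l (m + 1) * legendreDeriv l m

theorem derivative_assocSqPoly_succ {l m : ℕ} (hm : m < l) :
    derivative (assocSqPoly l (m + 1)) = assocCrossPoly l (m + 1) - assocCrossPoly l m := by
  have hc : C (assocNormConst l (m + 1)) * (((l : ℝ[X]) + m + 1) * ((l : ℝ[X]) - m))
      = C (assocNormConst l m) := by
    simpa using congrArg C (assocNormConst_succ_mul hm)
  simp only [assocSqPoly, assocCrossPoly, derivative_mul, derivative_pow, derivative_sub,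
    derivative_one, derivative_X, derivative_C, derivative_legendreDeriv,
    map_ofNat, map_natCast, map_add, map_one, Nat.cast_ofNat, Nat.cast_add, Nat.cast_one,
    Nat.add_sub_cancel, zero_mul, zero_add]
  push_cast
  linear_combination (C (assocNormConst l (m + 1)) * (1 - X ^ 2) ^ m * legendreDeriv l (m + 1))
      * legendreDeriv_ode l m - ((1 - X ^ 2) ^ m * legendreDeriv l (m + 1) * legendreDeriv l m) * hc

theorem assocSqPoly_add_two_mul_sum (l : ℕ) :
    assocSqPoly l 0 + 2 * ∑ m ∈ Finset.range l, assocSqPoly l (m + 1) = 1 := by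
  set F := assocSqPoly l 0 + 2 * ∑ m ∈ Finset.range l, assocSqPoly l (m + 1)
  have hF : derivative F = 0 := by
    rw [derivative_add, derivative_mul, map_sum, Finset.sum_congr rfl fun m hm ↦
      derivative_assocSqPoly_succ (Finset.mem_range.mp hm), Finset.sum_range_sub]
    simp only [assocSqPoly, assocNormConst_zero, map_one, pow_zero, mul_one, one_mul,
      derivative_pow, Nat.cast_ofNat, map_ofNat, Nat.add_one_sub_one, pow_one,
      derivative_legendreDeriv, zero_add, derivative_ofNat, zero_mul, assocCrossPoly,
      legendreDeriv_succ_self, mul_zero, zero_sub, mul_neg]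
    ring
  have h1 : F.eval 1 = 1 := by
    simp [F, assocSqPoly, assocNormConst_zero, legendreDeriv, legendreP_eval_one, eval_finsetSum]
  rw [eq_C_of_derivative_eq_zero hF] at h1 ⊢
  rw [eval_C] at h1
  rw [h1, map_one]

theorem assocP_sq {l m : ℕ} {x : ℝ} (hx : x ^ 2 ≤ 1) :
    assocP l m x ^ 2 = (1 - x ^ 2) ^ m * (legendreDeriv l m).eval x ^ 2 := by
  have hsqrt : ((1 - x ^ 2) ^ ((m : ℝ) / 2)) ^ 2 = (1 - x ^ 2) ^ m := by
    rw [← Real.rpow_natCast _ 2, ← Real.rpow_mul (by linarith), Nat.cast_ofNat,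
      div_mul_cancel₀ _ two_ne_zero, Real.rpow_natCast]
  rw [assocP, mul_pow, mul_pow, hsqrt, ← pow_mul, mul_comm m 2, pow_mul, neg_one_sq, one_pow,
    one_mul, legendreDeriv]

theorem sphY_zero_sq (l : ℕ) (θ φ : ℝ) :
    sphY l 0 θ φ ^ 2 = (2 * l + 1) * (assocSqPoly l 0).eval (Real.cos θ) := by
  rw [sphY, if_pos rfl, mul_pow, Real.sq_sqrt (by positivity), assocP_sq (Real.cos_sq_le_one θ)]
  simp [assocSqPoly, assocNormConst_zero]

theorem sphY_sq_add_sphY_neg_sq (l m : ℕ) (θ φ : ℝ) :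
    sphY l (m + 1) θ φ ^ 2 + sphY l (-(m + 1)) θ φ ^ 2
      = 2 * (2 * l + 1) * (assocSqPoly l (m + 1)).eval (Real.cos θ) := by
  have hcoef : Real.sqrt (2 * (2 * l + 1) * ((l - (m + 1)).factorial : ℝ)
      / ((l + (m + 1)).factorial : ℝ)) ^ 2 = 2 * (2 * l + 1) * assocNormConst l (m + 1) := by
    rw [Real.sq_sqrt (by positivity), assocNormConst]
    ring
  rw [sphY, if_neg (by omega), if_pos (by omega), sphY, if_neg (by omega), if_neg (by omega)]
  simp only [neg_neg, show ((m : ℤ) + 1).toNat = m + 1 by omega]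
  push_cast
  rw [mul_pow, mul_pow, mul_pow, mul_pow, hcoef, assocP_sq (Real.cos_sq_le_one θ)]
  simp only [assocSqPoly, eval_mul, eval_pow, eval_C, eval_sub, eval_one, eval_X]
  linear_combination (2 * (2 * (l : ℝ) + 1) * assocNormConst l (m + 1) *
    ((1 - Real.cos θ ^ 2) ^ (m + 1) * (legendreDeriv l (m + 1)).eval (Real.cos θ) ^ 2)) *
    Real.sin_sq_add_cos_sq (((m : ℝ) + 1) * φ)

theorem Finset.sum_Icc_neg_eq_add_sum_range {M : Type*} [AddCommMonoid M] (g : ℤ → M)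
    (l : ℕ) :
    ∑ m ∈ Finset.Icc (-l : ℤ) l, g m
      = g 0 + ∑ m ∈ Finset.range l, (g (m + 1) + g (-(m + 1))) := by
  induction l with
  | zero => simp
  | succ l ih =>
    have hIcc : Finset.Icc (-(l + 1 : ℕ) : ℤ) (l + 1 : ℕ)
        = insert ((l : ℤ) + 1) (insert (-((l : ℤ) + 1)) (Finset.Icc (-l : ℤ) l)) := by
      ext m; simp; omega
    rw [hIcc, Finset.sum_insert (by simp; omega), Finset.sum_insert (by simp), ih,
      Finset.sum_range_succ]
    abel

theorem sum_sphY_sq (l : ℕ) (θ φ : ℝ) :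
    ∑ m ∈ Finset.Icc (-l : ℤ) l, sphY l m θ φ ^ 2 = 2 * l + 1 := by
  rw [Finset.sum_Icc_neg_eq_add_sum_range, sphY_zero_sq]
  simp only [sphY_sq_add_sphY_neg_sq, ← Finset.mul_sum]
  have h := congrArg (eval (Real.cos θ)) (assocSqPoly_add_two_mul_sum l)
  simp only [eval_add, eval_mul, eval_finsetSum, eval_ofNat, eval_one] at h
  linear_combination (2 * (l : ℝ) + 1) * h


theorem sum_fvec_sq_of_sqrt_eq {d l : ℕ} (hl : l ≤ d) (θ φ : ℝ) :
    ∑ j ∈ Finset.univ.filter (fun j : Fin ((d + 1) ^ 2) ↦ Nat.sqrt j = l), fvec d j θ φ ^ 2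
      = 2 * l + 1 := by
  have hmem (j : ℕ) : Nat.sqrt j = l ↔ l * l ≤ j ∧ j < l * l + 2 * l + 1 := by
    rw [eq_comm, Nat.eq_sqrt, show (l + 1) * (l + 1) = l * l + 2 * l + 1 by ring]
  have hN : l * l + 2 * l + 1 ≤ (d + 1) ^ 2 := by nlinarith
  rw [← sum_sphY_sq l θ φ]
  refine Finset.sum_bij' (fun j _ ↦ (j : ℤ) - l * l - l)
    (fun m hm ↦ ⟨(l * l + l + m).toNat, ?_⟩) ?_ ?_ ?_ ?_ ?_
  · simp only [Finset.mem_Icc] at hm; omega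
  · intro j hj
    simp only [Finset.mem_filter, Finset.mem_univ, true_and, hmem, Finset.mem_Icc] at hj ⊢
    omega
  · intro m hm
    simp only [Finset.mem_filter, Finset.mem_univ, true_and, hmem, Finset.mem_Icc] at hm ⊢
    omega
  · intro j hj
    ext; simp only [Finset.mem_filter, Finset.mem_univ, true_and, hmem] at hj ⊢; omega
  · intro m hm
    simp only [Finset.mem_Icc] at hm
    dsimp only
    omega
  · intro j hj
    simp only [Finset.mem_filter, Finset.mem_univ, true_and] at hj
    rw [fvec, hj]
    ring_nf

theorem sum_fvec_comp_sq {d : ℕ} {ι n : Type*} [Fintype ι] [Fintype n] {k : ι → ℕ}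
    (hk : Function.Injective k) (hkd : ∀ i, k i ≤ d) {σ : n → Fin ((d + 1) ^ 2)}
    (hσ : Function.Injective σ)
    (hrange : ∀ j : Fin ((d + 1) ^ 2), (∃ c, σ c = j) ↔ ∃ i, Nat.sqrt (j : ℕ) = k i)
    (θ φ : ℝ) : ∑ c, fvec d (σ c) θ φ ^ 2 = ∑ i, (2 * (k i : ℝ) + 1) := by
  classical
  have himage : Finset.univ.image σ = Finset.univ.biUnion fun i ↦
      Finset.univ.filter fun j : Fin ((d + 1) ^ 2) ↦ Nat.sqrt j = k i := by
    ext j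
    simpa [eq_comm] using hrange j
  have hdisj : (↑(Finset.univ : Finset ι) : Set ι).PairwiseDisjoint fun i ↦
      Finset.univ.filter fun j : Fin ((d + 1) ^ 2) ↦ Nat.sqrt j = k i := by
    intro i _ i' _ hne
    simp only [Function.onFun, Finset.disjoint_filter]
    exact fun j _ hj hj' ↦ hne (hk (hj.symm.trans hj'))
  rw [← Finset.sum_image (f := fun j ↦ fvec d j θ φ ^ 2) fun a _ b _ h ↦ hσ h, himage,
    Finset.sum_biUnion hdisj]
  exact Finset.sum_congr rfl fun i _ ↦ sum_fvec_sq_of_sqrt_eq (hkd i) θ φ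

end AdditionTheorem

theorem trace_submatrix_infoMat {d : ℕ} {ξ : Measure (ℝ × ℝ)}
    (hint : ∀ i j, Integrable (fun z : ℝ × ℝ ↦ fvec d i z.1 z.2 * fvec d j z.1 z.2) ξ)
    {n : Type*} [Fintype n] (σ : n → Fin ((d + 1) ^ 2)) :
    ((infoMat d ξ).submatrix σ σ).trace = ∫ z, ∑ c, fvec d (σ c) z.1 z.2 ^ 2 ∂ξ := by
  simp only [sq]
  rw [integral_finsetSum _ fun c _ ↦ hint (σ c) (σ c)]
  rfl

theorem phi_p_optimality_general (d q : ℕ) (k : Fin (q + 1) → ℕ)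
    (hk : StrictMono k) (hkd : ∀ i, k i ≤ d)
    (s : ℕ) (hs : s = ∑ i, (2 * k i + 1))
    (σ : Fin s → Fin ((d + 1) ^ 2)) (hσ : Function.Injective σ)
    (hrange : ∀ j : Fin ((d + 1) ^ 2), (∃ c, σ c = j) ↔ ∃ i, Nat.sqrt (j : ℕ) = k i)
    (K : Matrix (Fin ((d + 1) ^ 2)) (Fin s) ℝ)
    (hK : ∀ i c, K i c = if i = σ c then 1 else 0)
    (ξ : Measure (ℝ × ℝ)) [IsProbabilityMeasure ξ]
    (hint : ∀ i j, Integrable (fun z : ℝ × ℝ => fvec d i z.1 z.2 * fvec d j z.1 z.2) ξ)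
    (Minv : Matrix (Fin ((d + 1) ^ 2)) (Fin ((d + 1) ^ 2)) ℝ)
    (hg : infoMat d ξ * Minv * infoMat d ξ = infoMat d ξ)
    (hrangeK : ∀ v : Fin ((d + 1) ^ 2) → ℝ,
      (∃ u, K.mulVec u = v) → ∃ u, (infoMat d ξ).mulVec u = v)
    (C : Matrix (Fin s) (Fin s) ℝ) (hCdef : C = Kᵀ * Minv * K)
    (hC : C.IsHermitian) (p : ℝ) (hp : p < 1) :
    (p ≠ 0 → (∑ i, (hC.eigenvalues i) ^ (-p)) ^ (1 / p) ≤ (s : ℝ) ^ (1 / p)) ∧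
    (1 : ℝ) ≤ C.det ∧
    ∃ i, (1 : ℝ) ≤ hC.eigenvalues i := by
  subst hCdef
  have hKσ : K = (1 : Matrix _ _ ℝ).submatrix id σ := by
    ext i c; simp [hK, Matrix.one_apply]
  have hM : (infoMat d ξ).PosSemidef := posSemidef_of_integral_mul hint
  have hKK : Kᵀ * K = 1 := by
    rw [← Matrix.mul_one Kᵀ, hKσ, Matrix.transpose_mul_mul_submatrix_one,
      Matrix.submatrix_one _ hσ]
  have hCS := Matrix.sq_dotProduct_self_le_of_mul_mul_eq_self hM hg hKK
    fun w ↦ hrangeK _ ⟨w, rfl⟩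
  have hD : (Kᵀ * infoMat d ξ * K).PosSemidef := by
    simpa using hM.conjTranspose_mul_mul_same K
  have hpos := hC.eigenvalues_pos_of_sq_dotProduct_le hD hCS
  have htrace : (Kᵀ * infoMat d ξ * K).trace = s := by
    rw [hKσ, Matrix.transpose_mul_mul_submatrix_one, trace_submatrix_infoMat hint]
    simp [sum_fvec_comp_sq hk.injective hkd hσ hrange, hs]
  have hsum : ∑ i, (hC.eigenvalues i)⁻¹ ≤ Fintype.card (Fin s) := by
    simpa [htrace] using hC.sum_inv_eigenvalues_le_trace hD hCS
  have : Nonempty (Fin s) :=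
    ⟨⟨0, hs ▸ Finset.sum_pos (fun _ _ ↦ by omega) Finset.univ_nonempty⟩⟩
  refine ⟨fun hp0 ↦ by simpa using rpow_sum_rpow_neg_le_of_sum_inv_le_card hp hp0 hpos hsum,
    ?_, exists_one_le_of_sum_inv_le_card hpos hsum⟩
  rw [hC.det_eq_prod_eigenvalues]
  exact_mod_cast one_le_prod_of_sum_inv_le_card hpos hsum

/-- Φ_p-optimality of the uniform distribution on the sphere: for every `p ∈ [-∞, 1)` and
every block selection matrix `K = K_{k₀,…,k_q}`, any design `ξ` on `[0,π] × (-π,π]` with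
`range K ⊆ range M(ξ)` satisfies `Φ_p(ξ) ≤ Φ_p(ξ*) = s^{1/p}`, where
`Φ_p(ξ) = (tr((Kᵀ M⁻(ξ) K)^{-p}))^{1/p}` is expressed via the eigenvalues of
`C = Kᵀ M⁻(ξ) K`; the cases `p = 0` (D-criterion, `det C ≥ 1`) and `p = -∞`
(E-criterion, `λ_max(C) ≥ 1`) are included. -/
theorem phi_p_optimality (d q : ℕ) (k : Fin (q + 1) → ℕ)
    (hk : StrictMono k) (hkd : ∀ i, k i ≤ d)
    (s : ℕ) (hs : s = ∑ i, (2 * k i + 1))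
    (σ : Fin s → Fin ((d + 1) ^ 2)) (hσ : Function.Injective σ)
    (hrange : ∀ j : Fin ((d + 1) ^ 2), (∃ c, σ c = j) ↔ ∃ i, Nat.sqrt (j : ℕ) = k i)
    (K : Matrix (Fin ((d + 1) ^ 2)) (Fin s) ℝ)
    (hK : ∀ i c, K i c = if i = σ c then 1 else 0)
    (ξ : Measure (ℝ × ℝ)) [IsProbabilityMeasure ξ]
    (hsupp : ξ ((Set.Icc (0 : ℝ) π ×ˢ Set.Ioc (-π) π)ᶜ) = 0)
    (hint : ∀ i j, Integrable (fun z : ℝ × ℝ => fvec d i z.1 z.2 * fvec d j z.1 z.2) ξ)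
    (Minv : Matrix (Fin ((d + 1) ^ 2)) (Fin ((d + 1) ^ 2)) ℝ)
    (hg : infoMat d ξ * Minv * infoMat d ξ = infoMat d ξ)
    (hrangeK : ∀ v : Fin ((d + 1) ^ 2) → ℝ,
      (∃ u, K.mulVec u = v) → ∃ u, (infoMat d ξ).mulVec u = v)
    (C : Matrix (Fin s) (Fin s) ℝ) (hCdef : C = Kᵀ * Minv * K)
    (hC : C.IsHermitian) (p : ℝ) (hp : p < 1) :
    (p ≠ 0 → (∑ i, (hC.eigenvalues i) ^ (-p)) ^ (1 / p) ≤ (s : ℝ) ^ (1 / p)) ∧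
    (1 : ℝ) ≤ C.det ∧
    ∃ i, (1 : ℝ) ≤ hC.eigenvalues i :=
  phi_p_optimality_general d q k hk hkd s hs σ hσ hrange K hK ξ hint Minv hg hrangeK C hCdef hC p hp
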